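/- For Re α > 0, a > 0 and p ∈ ℝ, ∫₀^a x^{α−1} (a−x)^{α−1} e^{−px} dx = √π Γ(α) (a/p)^{α−1/2} e^{−ap/2} I_{α−1/2}(ap/2), where I_ν is the modified Bessel function of the first kind. -/

import Mathlib

/-!
Substituting `x = a (1 - t) / 2` turns the integral into
`(a/2)^(2α-1) e^(-ap/2) ∫_{-1}^{1} (1 - t²)^(α-1) e^(zt) dt` with `z = ap/2`, and the last integral
is Poisson's representation of `I_{α-1/2}(z)`. To evaluate it, fold it onto `[0, 1]` as
`2 ∫₀¹ (1 - t²)^(α-1) cosh(zt) dt`, substitute `v = t²` and expand `cosh (z √v)` termwise: the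
`k`-th term is `z^(2k)/(2k)!` times the Beta integral `B(k + 1/2, α)`, and Legendre's duplication
formula `Γ(k + 1/2) k! = (2k)! √π / 4^k` turns these into the terms of the Bessel series.
-/

/-- Modified Bessel function of the first kind. -/
noncomputable def besselI (ν x : ℝ) : ℝ :=
  ∑' k : ℕ, (1 / ((k.factorial : ℝ) * Real.Gamma (ν + k + 1))) *
    (x / 2) ^ (2 * (k : ℝ) + ν)

open MeasureTheory Set Real intervalIntegral
open scoped Nat

lemma ofReal_rpow_mul_one_sub_rpow {u v x : ℝ} (hx : x ∈ Icc (0 : ℝ) 1) :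
    ((x ^ (u - 1) * (1 - x) ^ (v - 1) : ℝ) : ℂ) =
      (x : ℂ) ^ ((u : ℂ) - 1) * (1 - (x : ℂ)) ^ ((v : ℂ) - 1) := by
  rw [Complex.ofReal_mul, Complex.ofReal_cpow hx.1, Complex.ofReal_cpow (sub_nonneg.2 hx.2)]
  push_cast
  rfl

lemma intervalIntegrable_rpow_mul_one_sub_rpow {u v : ℝ} (hu : 0 < u) (hv : 0 < v) :
    IntervalIntegrable (fun x => x ^ (u - 1) * (1 - x) ^ (v - 1)) volume 0 1 := by
  refine (Complex.betaIntegral_convergent (u := u) (v := v) (by simpa) (by simpa)).norm.congr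
    fun x hx => ?_
  have hx' : x ∈ Icc (0 : ℝ) 1 := Ioc_subset_Icc_self (uIoc_of_le (zero_le_one' ℝ) ▸ hx)
  rw [← ofReal_rpow_mul_one_sub_rpow hx', Complex.norm_real, Real.norm_of_nonneg]
  exact mul_nonneg (rpow_nonneg hx'.1 _) (rpow_nonneg (sub_nonneg.2 hx'.2) _)

lemma integral_rpow_mul_one_sub_rpow {u v : ℝ} (hu : 0 < u) (hv : 0 < v) :
    ∫ x in (0 : ℝ)..1, x ^ (u - 1) * (1 - x) ^ (v - 1) = Gamma u * Gamma v / Gamma (u + v) := by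
  have h := Complex.betaIntegral_eq_Gamma_mul_div u v (by simpa) (by simpa)
  rw [Complex.betaIntegral, ← integral_congr fun x hx =>
    ofReal_rpow_mul_one_sub_rpow (u := u) (v := v) (uIcc_of_le (zero_le_one' ℝ) ▸ hx),
    intervalIntegral.integral_ofReal, ← Complex.ofReal_add, Complex.Gamma_ofReal,
    Complex.Gamma_ofReal, Complex.Gamma_ofReal] at h
  exact_mod_cast h

lemma Gamma_nat_add_half_mul_factorial (k : ℕ) :
    Gamma (k + 1 / 2) * k ! = (2 * k)! * √π / 4 ^ k := by
  have h := Gamma_mul_Gamma_add_half (k + 1 / 2)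
  rw [show (k : ℝ) + 1 / 2 + 1 / 2 = k + 1 by ring, show 2 * ((k : ℝ) + 1 / 2) = (2 * k : ℕ) + 1 by
    push_cast; ring, Gamma_nat_eq_factorial, Gamma_nat_eq_factorial,
    show (1 : ℝ) - ((2 * k : ℕ) + 1) = -((2 * k : ℕ) : ℝ) by ring, rpow_neg zero_le_two,
    rpow_natCast, pow_mul] at h
  rw [h, show (2 : ℝ) ^ 2 = 4 by norm_num]
  ring

lemma pow_div_factorial_mul_beta_nat_add_half (z α : ℝ) (k : ℕ) :
    z ^ (2 * k) / (2 * k)! * (Gamma (k + 1 / 2) * Gamma α / Gamma (k + 1 / 2 + α)) =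
      √π * Gamma α * ((z / 2) ^ (2 * k) / (k ! * Gamma (α - 1 / 2 + k + 1))) := by
  have hk : (k ! : ℝ) ≠ 0 := by positivity
  rw [eq_div_of_mul_eq hk (Gamma_nat_add_half_mul_factorial k),
    show α - 1 / 2 + k + 1 = k + 1 / 2 + α by ring, div_pow, pow_mul 2,
    show (2 : ℝ) ^ 2 = 4 by norm_num]
  field_simp

lemma besselI_eq_rpow_mul_tsum {ν z : ℝ} (hz : 0 < z) :
    besselI ν z = (z / 2) ^ ν * ∑' k : ℕ, (z / 2) ^ (2 * k) / (k ! * Gamma (ν + k + 1)) := by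
  rw [besselI, ← tsum_mul_left]
  congr 1 with k
  rw [rpow_add (by positivity), show 2 * (k : ℝ) = (2 * k : ℕ) by push_cast; ring, rpow_natCast]
  ring

lemma integral_symm_eq_integral_add_comp_neg {E : Type*} [NormedAddCommGroup E]
    [NormedSpace ℝ E] {f : ℝ → E} {c : ℝ} (hf : IntervalIntegrable f volume 0 c)
    (hf' : IntervalIntegrable (fun x => f (-x)) volume 0 c) :
    ∫ x in -c..c, f x = ∫ x in 0..c, (f x + f (-x)) := by
  have hneg : IntervalIntegrable f volume (-c) 0 := by
    simpa using ((IntervalIntegrable.iff_comp_neg (by simp)).1 hf').symm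
  rw [← integral_add_adjacent_intervals hneg hf, integral_add hf hf', add_comm]
  congr 1
  simp

lemma intervalIntegrable_one_sub_sq_rpow {α : ℝ} (hα : 0 < α) :
    IntervalIntegrable (fun t => (1 - t ^ 2) ^ (α - 1)) volume 0 1 := by
  have hsing : IntervalIntegrable (fun t => (1 - t) ^ (α - 1)) volume 0 1 := by
    have := (intervalIntegrable_rpow' (a := 0) (b := 1) (r := α - 1) (by linarith)).comp_sub_left 1
    simpa using this.symm
  have hreg : ContinuousOn (fun t : ℝ => (1 + t) ^ (α - 1)) (uIcc 0 1) :=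
    ContinuousOn.rpow_const (by fun_prop) fun t ht =>
      Or.inl (by rw [uIcc_of_le zero_le_one] at ht; linarith [ht.1])
  refine (hsing.mul_continuousOn hreg).congr fun t ht => ?_
  rw [uIoc_of_le zero_le_one] at ht
  rw [← mul_rpow (by linarith [ht.2]) (by linarith [ht.1])]
  ring_nf

lemma hasSum_integral_rpow_mul_one_sub_rpow_mul_cosh_sqrt {α : ℝ} (hα : 0 < α) (z : ℝ) :
    HasSum (fun k : ℕ => z ^ (2 * k) / (2 * k)! *
        (Gamma (k + 1 / 2) * Gamma α / Gamma (k + 1 / 2 + α)))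
      (∫ v in (0 : ℝ)..1, v ^ (1 / 2 - 1 : ℝ) * (1 - v) ^ (α - 1) * cosh (z * √v)) := by
  set F : ℕ → ℝ → ℝ := fun k v =>
    z ^ (2 * k) / (2 * k)! * (v ^ ((k : ℝ) + 1 / 2 - 1) * (1 - v) ^ (α - 1))
  have hF_int (k : ℕ) : IntervalIntegrable (F k) volume 0 1 :=
    (intervalIntegrable_rpow_mul_one_sub_rpow (by positivity) hα).const_mul _
  have hF_nonneg (k : ℕ) (v : ℝ) (hv : v ∈ Ioc (0 : ℝ) 1) : 0 ≤ F k v :=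
    mul_nonneg (div_nonneg ((even_two_mul k).pow_nonneg z) (Nat.cast_nonneg _))
      (mul_nonneg (rpow_nonneg hv.1.le _) (rpow_nonneg (sub_nonneg.2 hv.2) _))
  have hF_sum (v : ℝ) (hv : v ∈ Ioc (0 : ℝ) 1) : HasSum (fun k => F k v)
      (v ^ (1 / 2 - 1 : ℝ) * (1 - v) ^ (α - 1) * cosh (z * √v)) := by
    refine ((hasSum_cosh (z * √v)).mul_left _).congr_fun fun k => ?_
    dsimp only [F]
    rw [mul_pow, pow_mul (√v), sq_sqrt hv.1.le, add_sub_assoc, rpow_add hv.1, rpow_natCast]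
    ring
  have hg : IntervalIntegrable (fun v => v ^ (1 / 2 - 1 : ℝ) * (1 - v) ^ (α - 1) * cosh (z * √v))
      volume 0 1 :=
    (intervalIntegrable_rpow_mul_one_sub_rpow one_half_pos hα).mul_continuousOn (by fun_prop)
  have hF_integral (k : ℕ) : ∫ v in (0 : ℝ)..1, F k v =
      z ^ (2 * k) / (2 * k)! * (Gamma (k + 1 / 2) * Gamma α / Gamma (k + 1 / 2 + α)) := by
    rw [intervalIntegral.integral_const_mul, integral_rpow_mul_one_sub_rpow (by positivity) hα]
  simp_rw [← hF_integral]
  refine hasSum_integral_of_dominated_convergence F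
    (fun k => (hF_int k).def'.aestronglyMeasurable)
    (fun k => ae_of_all _ fun v hv => (norm_of_nonneg (hF_nonneg k v ?_)).le)
    (ae_of_all _ fun v hv => (hF_sum v ?_).summable)
    (hg.congr fun v hv => ((hF_sum v ?_).tsum_eq).symm)
    (ae_of_all _ fun v hv => hF_sum v ?_)
  all_goals simpa [uIoc_of_le zero_le_one] using hv

theorem rpow_mul_integral_one_sub_sq_rpow_mul_exp_eq_besselI {α z : ℝ} (hα : 0 < α)
    (hz : 0 < z) :
    (z / 2) ^ (α - 1 / 2) * ∫ t in (-1 : ℝ)..1, (1 - t ^ 2) ^ (α - 1) * exp (z * t) =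
      √π * Gamma α * besselI (α - 1 / 2) z := by
  set g : ℝ → ℝ := fun v => v ^ (1 / 2 - 1 : ℝ) * (1 - v) ^ (α - 1) * cosh (z * √v)
  have hw := intervalIntegrable_one_sub_sq_rpow hα
  have hfold : ∫ t in (-1 : ℝ)..1, (1 - t ^ 2) ^ (α - 1) * exp (z * t) =
      ∫ t in (0 : ℝ)..1, (2 * t) • (g ∘ fun t => t ^ 2) t := by
    rw [integral_symm_eq_integral_add_comp_neg (hw.mul_continuousOn (by fun_prop))
      (by simpa using hw.mul_continuousOn (g := fun t => exp (-(z * t))) (by fun_prop))]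
    refine integral_congr_ae (ae_of_all _ fun t ht => ?_)
    rw [uIoc_of_le zero_le_one] at ht
    have hinv : ((t ^ 2) ^ (1 / 2 - 1 : ℝ)) * t = 1 := by
      rw [← rpow_natCast, ← rpow_mul ht.1.le, ← rpow_add_one ht.1.ne']
      norm_num
    simp only [g, Function.comp_apply, smul_eq_mul, sqrt_sq ht.1.le, cosh_eq, neg_sq, mul_neg]
    linear_combination -(exp (z * t) + exp (-(z * t))) * (1 - t ^ 2) ^ (α - 1) * hinv
  have hseries : HasSum
      (fun k : ℕ => √π * Gamma α * ((z / 2) ^ (2 * k) / (k ! * Gamma (α - 1 / 2 + k + 1))))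
      (∫ v in (0 : ℝ)..1, g v) :=
    (hasSum_integral_rpow_mul_one_sub_rpow_mul_cosh_sqrt hα z).congr_fun fun k =>
      (pow_div_factorial_mul_beta_nat_add_half z α k).symm
  rw [hfold, integral_deriv_smul_comp_of_deriv_nonneg (by fun_prop)
    (fun t _ => by simpa using hasDerivAt_pow 2 t) (fun t ht => by simp at ht; linarith [ht.1]),
    besselI_eq_rpow_mul_tsum hz, zero_pow two_ne_zero, one_pow, ← hseries.tsum_eq, tsum_mul_left]
  ring

lemma integral_rpow_mul_rpow_mul_exp_eq {α a p : ℝ} (ha : 0 < a) :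
    ∫ x in (0 : ℝ)..a, x ^ (α - 1) * (a - x) ^ (α - 1) * exp (-p * x) =
      (a / 2) ^ (2 * α - 1) * exp (-a * p / 2) *
        ∫ t in (-1 : ℝ)..1, (1 - t ^ 2) ^ (α - 1) * exp (a * p / 2 * t) := by
  have h := integral_comp_sub_mul (a := -1) (b := 1)
    (fun x => x ^ (α - 1) * (a - x) ^ (α - 1) * exp (-p * x)) (half_pos ha).ne' (a / 2)
  rw [show a / 2 - a / 2 * 1 = 0 by ring, show a / 2 - a / 2 * -1 = a by ring, smul_eq_mul,
    eq_inv_mul_iff_mul_eq₀ (half_pos ha).ne'] at h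
  rw [← h, ← intervalIntegral.integral_const_mul, ← intervalIntegral.integral_const_mul]
  refine integral_congr fun t ht => ?_
  rw [uIcc_of_le (by norm_num)] at ht
  have h1 : (0 : ℝ) ≤ 1 - t := by linarith [ht.2]
  have h2 : (0 : ℝ) ≤ 1 + t := by linarith [ht.1]
  have hpow : (a / 2) ^ (2 * α - 1) = a / 2 * ((a / 2) ^ (α - 1) * (a / 2) ^ (α - 1)) := by
    rw [show 2 * α - 1 = 1 + ((α - 1) + (α - 1)) by ring, rpow_add (half_pos ha),
      rpow_add (half_pos ha), rpow_one]
  rw [show a / 2 - a / 2 * t = a / 2 * (1 - t) by ring,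
    show a - a / 2 * (1 - t) = a / 2 * (1 + t) by ring, mul_rpow (half_pos ha).le h1,
    mul_rpow (half_pos ha).le h2, show 1 - t ^ 2 = (1 - t) * (1 + t) by ring, mul_rpow h1 h2, hpow,
    show -p * (a / 2 * (1 - t)) = -a * p / 2 + a * p / 2 * t by ring, exp_add]
  ring

theorem integral_rpow_mul_exp (α a p : ℝ) (hα : 0 < α) (ha : 0 < a) (hp : 0 < p) :
    ∫ x in (0:ℝ)..a, x ^ (α - 1) * (a - x) ^ (α - 1) * Real.exp (-p * x) =
      Real.sqrt Real.pi * Real.Gamma α * (a / p) ^ (α - 1/2) *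
        Real.exp (-a * p / 2) * besselI (α - 1/2) (a * p / 2) := by
  have hpoisson :=
    rpow_mul_integral_one_sub_sq_rpow_mul_exp_eq_besselI hα (by positivity : 0 < a * p / 2)
  have hpow : (a / p) ^ (α - 1 / 2) * (a * p / 2 / 2) ^ (α - 1 / 2) = (a / 2) ^ (2 * α - 1) := by
    rw [← mul_rpow (by positivity) (by positivity),
      show a / p * (a * p / 2 / 2) = (a / 2) ^ (2 : ℝ) by rw [rpow_two]; field_simp,
      ← rpow_mul (by positivity)]
    ring_nf
  rw [integral_rpow_mul_rpow_mul_exp_eq ha, ← hpow]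
  linear_combination (a / p) ^ (α - 1 / 2) * exp (-a * p / 2) * hpoisson
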